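/- arXiv:2502.00577 — 3 statements merged into one kernel-verified Lean document; each statement's English description precedes it below -/
import Mathlib

section
/- Let P and Q be joint distributions of a pair (X_v, X_t) over a finite product set, and let M = (P + Q)/2. Then 2·D_JS(P_{X_v X_t} ‖ Q_{X_v X_t}) ≤ D_JS(P_{X_v} ‖ Q_{X_v}) + D_JS(P_{X_t} ‖ Q_{X_t}) + D̄_JS(P_{X_t|X_v} ‖ Q_{X_t|X_v}) + D̄_JS(P_{X_v|X_t} ‖ Q_{X_v|X_t}), where D̄_JS(P_{A|B}‖Q_{A|B}) := E_{b∼P_B}[D_JS(P_{A|B=b}‖Q_{A|B=b})] + E_{b∼Q_B}[D_JS(P_{A|B=b}‖Q_{A|B=b})]. -/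
open Finset Real

/-- A probability mass function on a finite type. -/
def IsPMF {α : Type*} [Fintype α] (p : α → ℝ) : Prop :=
  (∀ x, 0 ≤ p x) ∧ ∑ x, p x = 1

/-- Shannon entropy (natural log). -/
noncomputable def entropy {α : Type*} [Fintype α] (p : α → ℝ) : ℝ :=
  -∑ x, p x * Real.log (p x)

/-- Kullback–Leibler divergence (natural log). -/
noncomputable def klDiv {α : Type*} [Fintype α] (p q : α → ℝ) : ℝ :=
  ∑ x, p x * Real.log (p x / q x)

/-- Jensen–Shannon divergence. -/
noncomputable def jsDiv {α : Type*} [Fintype α] (p q : α → ℝ) : ℝ :=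
  (klDiv p (fun x => (p x + q x) / 2) + klDiv q (fun x => (p x + q x) / 2)) / 2

/-- Un-halved (ℓ¹) total variation distance. -/
noncomputable def tvL1 {α : Type*} [Fintype α] (p q : α → ℝ) : ℝ :=
  ∑ x, |p x - q x|

/-!
Write `2 JS(P, Q) = 2 H(M) - H(P) - H(Q)`. Splitting each entropy along `X_v` by
`H(f) = η(Σ f) + (Σ f) H(f / Σ f)` (with `η = negMulLog`) leaves the marginal term
`2 JS(P_v, Q_v)` and, for each `v` with `a = P_v(v)`, `b = Q_v(v)`, `λ = a / (a + b)`, the term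
`(a + b) (H(λ P_{t|v} + (1 - λ) Q_{t|v}) - λ H(P_{t|v}) - (1 - λ) H(Q_{t|v}))`: the conditional of
`M` is that mixture of the two conditionals. For a concave function the Jensen gap at any weight
is at most twice the gap at weight `1/2`, so this term is at most `2 (a + b) JS(P_{t|v}, Q_{t|v})`.
Hence `JS(P, Q) ≤ JS(P_v, Q_v) + Σ_v (a_v + b_v) JS(P_{t|v}, Q_{t|v})`, and adding the same bound
with `X_v` and `X_t` exchanged gives the theorem.
-/

theorem ConcaveOn.jensen_gap_le_two_mul_midpoint_gap {𝕜 E : Type*} [Field 𝕜] [LinearOrder 𝕜]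
    [IsStrictOrderedRing 𝕜] [AddCommGroup E] [Module 𝕜 E] {s : Set E} {f : E → 𝕜}
    (hf : ConcaveOn 𝕜 s f) {x y : E} (hx : x ∈ s) (hy : y ∈ s) {a b : 𝕜} (ha : 0 ≤ a)
    (hb : 0 ≤ b) (hab : a + b = 1) :
    f (a • x + b • y) - (a * f x + b * f y) ≤
      2 * f ((1 / 2 : 𝕜) • x + (1 / 2 : 𝕜) • y) - (f x + f y) := by
  have h_half : (0 : 𝕜) ≤ 1 / 2 := by norm_num
  have h_mid := hf.2 (hf.1 hx hy ha hb hab) (hf.1 hx hy hb ha (by rwa [add_comm]))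
    h_half h_half (add_halves 1)
  have h_swap := hf.2 hx hy hb ha (by rwa [add_comm])
  -- `a • x + b • y` and `b • x + a • y` have the same midpoint as `x` and `y`.
  have h_pts : (1 / 2 : 𝕜) • (a • x + b • y) + (1 / 2 : 𝕜) • (b • x + a • y) =
      (1 / 2 : 𝕜) • x + (1 / 2 : 𝕜) • y := by
    obtain rfl : b = 1 - a := by rw [← hab]; ring
    module
  rw [h_pts, smul_eq_mul, smul_eq_mul] at h_mid
  simp only [smul_eq_mul] at h_swap
  linear_combination 2 * h_mid + h_swap - (f x + f y) * hab

theorem mul_log_div_eq {x m : ℝ} (hm : x ≠ 0 → m ≠ 0) :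
    x * log (x / m) = x * log x - x * log m := by
  rcases eq_or_ne x 0 with rfl | hx
  · simp
  · rw [log_div hx (hm hx)]; ring

section Entropy

variable {α : Type*} [Fintype α]

theorem entropy_eq_sum_negMulLog (p : α → ℝ) : entropy p = ∑ x, negMulLog (p x) := by
  simp [entropy, negMulLog, sum_neg_distrib]

theorem concaveOn_entropy : ConcaveOn ℝ {p : α → ℝ | ∀ x, 0 ≤ p x} entropy := by
  refine ⟨fun p hp q hq a b ha hb _ x => ?_, fun p hp q hq a b ha hb hab => ?_⟩
  · simp only [Pi.add_apply, Pi.smul_apply, smul_eq_mul]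
    have := hp x
    have := hq x
    positivity
  · simp only [entropy_eq_sum_negMulLog, smul_eq_mul, mul_sum, ← sum_add_distrib]
    exact sum_le_sum fun x _ => concaveOn_negMulLog.2 (hp x) (hq x) ha hb hab

theorem two_mul_jsDiv_eq {p q : α → ℝ} (hp : ∀ x, 0 ≤ p x) (hq : ∀ x, 0 ≤ q x) :
    2 * jsDiv p q = 2 * entropy (fun x => (p x + q x) / 2) - entropy p - entropy q := by
  have hm_ne : ∀ x, (p x ≠ 0 ∨ q x ≠ 0) → (p x + q x) / 2 ≠ 0 := by
    rintro x (h | h)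
    · have := (hp x).lt_of_ne' h; have := hq x; positivity
    · have := (hq x).lt_of_ne' h; have := hp x; positivity
  simp only [jsDiv, klDiv, entropy, mul_div_cancel₀ _ (two_ne_zero' ℝ),
    mul_log_div_eq (fun h => hm_ne _ (Or.inl h)), mul_log_div_eq (fun h => hm_ne _ (Or.inr h)),
    sum_sub_distrib]
  have h_avg : ∑ x, (p x + q x) / 2 * log ((p x + q x) / 2) =
      (∑ x, p x * log ((p x + q x) / 2) + ∑ x, q x * log ((p x + q x) / 2)) / 2 := by
    rw [← sum_add_distrib, sum_div]
    exact sum_congr rfl fun x _ => by ring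
  linarith

theorem entropy_eq_negMulLog_sum_add {f : α → ℝ} (hf : ∀ x, 0 ≤ f x) :
    entropy f = negMulLog (∑ x, f x) + (∑ x, f x) * entropy (fun x => f x / ∑ x', f x') := by
  set a := ∑ x, f x
  rcases eq_or_ne a 0 with ha | ha
  · have hf0 : ∀ x, f x = 0 := fun x =>
      (sum_eq_zero_iff_of_nonneg fun x _ => hf x).1 ha x (mem_univ x)
    simp [entropy_eq_sum_negMulLog, hf0, ha]
  · have h_split : ∀ x, negMulLog (f x) = f x / a * negMulLog a + a * negMulLog (f x / a) :=
      fun x => by rw [← negMulLog_mul, mul_div_cancel₀ _ ha]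
    simp only [entropy_eq_sum_negMulLog, h_split, sum_add_distrib, ← sum_mul, ← sum_div, ← mul_sum]
    rw [show (∑ x, f x) / a = 1 from div_self ha, one_mul]

theorem two_mul_entropy_avg_sub_le {f g : α → ℝ} (hf : ∀ x, 0 ≤ f x) (hg : ∀ x, 0 ≤ g x) :
    2 * entropy (fun x => (f x + g x) / 2) - entropy f - entropy g ≤
      2 * negMulLog ((∑ x, f x + ∑ x, g x) / 2) - negMulLog (∑ x, f x) - negMulLog (∑ x, g x) +
        2 * (∑ x, f x + ∑ x, g x) *
          jsDiv (fun x => f x / ∑ x', f x') (fun x => g x / ∑ x', g x') := by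
  set a := ∑ x, f x
  set b := ∑ x, g x
  set f' := fun x => f x / a
  set g' := fun x => g x / b
  have ha : 0 ≤ a := sum_nonneg fun x _ => hf x
  have hb : 0 ≤ b := sum_nonneg fun x _ => hg x
  have hf' : ∀ x, 0 ≤ f' x := fun x => div_nonneg (hf x) ha
  have hg' : ∀ x, 0 ≤ g' x := fun x => div_nonneg (hg x) hb
  have h_sum_avg : ∑ x, (f x + g x) / 2 = (a + b) / 2 := by rw [← sum_div, sum_add_distrib]
  have h_avg_cond :
      (fun x => (f x + g x) / 2 / ((a + b) / 2)) = (a / (a + b)) • f' + (b / (a + b)) • g' := by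
    funext x
    have hfa : f x / a * a = f x := div_mul_cancel_of_imp fun h =>
      (sum_eq_zero_iff_of_nonneg fun x _ => hf x).1 h x (mem_univ x)
    have hgb : g x / b * b = g x := div_mul_cancel_of_imp fun h =>
      (sum_eq_zero_iff_of_nonneg fun x _ => hg x).1 h x (mem_univ x)
    simp only [Pi.add_apply, Pi.smul_apply, smul_eq_mul, f', g']
    rw [div_div_div_cancel_right₀ two_ne_zero, mul_comm (a / _), mul_comm (b / _), ← mul_div_assoc,
      ← mul_div_assoc, hfa, hgb, add_div]
  have h_mix : (a + b) * entropy ((a / (a + b)) • f' + (b / (a + b)) • g') -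
      a * entropy f' - b * entropy g' ≤ (a + b) * (2 * jsDiv f' g') := by
    rcases (add_nonneg ha hb).eq_or_lt with hs | hs
    · rw [show a = 0 by linarith, show b = 0 by linarith]
      simp
    have h_gap := concaveOn_entropy.jensen_gap_le_two_mul_midpoint_gap hf' hg'
      (div_nonneg ha hs.le) (div_nonneg hb hs.le) (by rw [← add_div, div_self hs.ne'])
    have h_mid : (1 / 2 : ℝ) • f' + (1 / 2 : ℝ) • g' = fun x => (f' x + g' x) / 2 := by
      funext x; simp only [Pi.add_apply, Pi.smul_apply, smul_eq_mul]; ring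
    rw [h_mid] at h_gap
    calc (a + b) * entropy ((a / (a + b)) • f' + (b / (a + b)) • g') -
          a * entropy f' - b * entropy g'
        = (a + b) * (entropy ((a / (a + b)) • f' + (b / (a + b)) • g') -
            (a / (a + b) * entropy f' + b / (a + b) * entropy g')) := by
          field_simp; ring
      _ ≤ (a + b) * (2 * jsDiv f' g') := by
          gcongr
          linarith [two_mul_jsDiv_eq hf' hg']
  have h_avg := entropy_eq_negMulLog_sum_add fun x =>
    div_nonneg (add_nonneg (hf x) (hg x)) zero_le_two
  rw [h_sum_avg, h_avg_cond] at h_avg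
  linarith [entropy_eq_negMulLog_sum_add hf, entropy_eq_negMulLog_sum_add hg]

end Entropy

section Product

variable {V T : Type*} [Fintype V] [Fintype T]

theorem entropy_prod (p : V × T → ℝ) : entropy p = ∑ v, entropy (fun t => p (v, t)) := by
  simp only [entropy_eq_sum_negMulLog, Fintype.sum_prod_type]

theorem jsDiv_le_jsDiv_fst_add_sum {p q : V × T → ℝ} (hp : ∀ x, 0 ≤ p x) (hq : ∀ x, 0 ≤ q x) :
    jsDiv p q ≤ jsDiv (fun v => ∑ t, p (v, t)) (fun v => ∑ t, q (v, t)) +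
      ∑ v, (∑ t, p (v, t) + ∑ t, q (v, t)) *
        jsDiv (fun t => p (v, t) / ∑ t', p (v, t')) (fun t => q (v, t) / ∑ t', q (v, t')) := by
  have h_fiber := sum_le_sum fun v (_ : v ∈ univ) =>
    two_mul_entropy_avg_sub_le (fun t => hp (v, t)) (fun t => hq (v, t))
  have h_marg := two_mul_jsDiv_eq (fun v => sum_nonneg fun t (_ : t ∈ univ) => hp (v, t))
    (fun v => sum_nonneg fun t (_ : t ∈ univ) => hq (v, t))
  have h_joint := two_mul_jsDiv_eq hp hq
  simp only [entropy_prod] at h_joint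
  simp only [entropy_eq_sum_negMulLog] at h_marg
  simp only [sum_add_distrib, sum_sub_distrib, ← mul_sum, mul_assoc] at h_fiber
  linarith

theorem jsDiv_comp_swap (p q : V × T → ℝ) :
    jsDiv (fun x : T × V => p x.swap) (fun x => q x.swap) = jsDiv p q := by
  simp only [jsDiv, klDiv]
  congr 2 <;> exact Fintype.sum_equiv (Equiv.prodComm T V) _ _ fun _ => rfl

theorem jsDiv_le_jsDiv_snd_add_sum {p q : V × T → ℝ} (hp : ∀ x, 0 ≤ p x) (hq : ∀ x, 0 ≤ q x) :
    jsDiv p q ≤ jsDiv (fun t => ∑ v, p (v, t)) (fun t => ∑ v, q (v, t)) +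
      ∑ t, (∑ v, p (v, t) + ∑ v, q (v, t)) *
        jsDiv (fun v => p (v, t) / ∑ v', p (v', t)) (fun v => q (v, t) / ∑ v', q (v', t)) := by
  rw [← jsDiv_comp_swap p q]
  exact jsDiv_le_jsDiv_fst_add_sum (fun x => hp x.swap) (fun x => hq x.swap)

end Product

theorem joint_js_chain_rule_bound {V T : Type*} [Fintype V] [Fintype T]
    (p q : V × T → ℝ) (hp : IsPMF p) (hq : IsPMF q) :
    2 * jsDiv p q ≤
      jsDiv (fun v => ∑ t, p (v, t)) (fun v => ∑ t, q (v, t)) +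
      jsDiv (fun t => ∑ v, p (v, t)) (fun t => ∑ v, q (v, t)) +
      ((∑ v, (∑ t, p (v, t)) *
          jsDiv (fun t => p (v, t) / ∑ t', p (v, t'))
                (fun t => q (v, t) / ∑ t', q (v, t'))) +
       (∑ v, (∑ t, q (v, t)) *
          jsDiv (fun t => p (v, t) / ∑ t', p (v, t'))
                (fun t => q (v, t) / ∑ t', q (v, t')))) +
      ((∑ t, (∑ v, p (v, t)) *
          jsDiv (fun v => p (v, t) / ∑ v', p (v', t))
                (fun v => q (v, t) / ∑ v', q (v', t))) +
       (∑ t, (∑ v, q (v, t)) *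
          jsDiv (fun v => p (v, t) / ∑ v', p (v', t))
                (fun v => q (v, t) / ∑ v', q (v', t)))) := by
  have h_fst := jsDiv_le_jsDiv_fst_add_sum hp.1 hq.1
  have h_snd := jsDiv_le_jsDiv_snd_add_sum hp.1 hq.1
  simp only [add_mul, sum_add_distrib] at h_fst h_snd
  linarith
end

section
/- Let P and Q be distributions on a finite set X, M = (P+Q)/2, and let f: X → [0, Ĥ] be bounded. Then E_{x∼Q}[f(x)] − E_{x∼P}[f(x)] ≤ Ĥ · √(2 · D_JS(P ‖ Q)). -/
open Finset Real

/-!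
With `M = (P + Q) / 2`, the Donsker–Varadhan inequality gives, for every real `t`,
`t (E_Q f - E_M f) ≤ KL(Q ‖ M) + log E_M exp (t (f - E_M f))`, and Hoeffding's lemma bounds the
last term by `t² Ĥ² / 8`. The same bound for `P` at `-t` added to this one yields
`t (E_Q f - E_P f) ≤ 2 JS(P, Q) + t² Ĥ² / 4` for all `t`, and optimizing in `t` gives the claim.
-/

open MeasureTheory ProbabilityTheory

section PointMass

variable {X : Type*} [Fintype X] [MeasurableSpace X] {p : X → ℝ}

noncomputable def pointMassMeasure (p : X → ℝ) : Measure X :=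
  ∑ x, ENNReal.ofReal (p x) • Measure.dirac x

lemma isProbabilityMeasure_pointMassMeasure (hp : IsPMF p) :
    IsProbabilityMeasure (pointMassMeasure p) := by
  constructor
  simp [pointMassMeasure, ← ENNReal.ofReal_sum_of_nonneg (fun x _ => hp.1 x), hp.2]

variable [MeasurableSingletonClass X]

lemma pointMassMeasure_real_singleton (hp : ∀ x, 0 ≤ p x) (x : X) :
    (pointMassMeasure p).real {x} = p x := by
  rw [measureReal_def, pointMassMeasure, Measure.coe_finsetSum, Finset.sum_apply,
    Finset.sum_eq_single x (fun y _ hyx => by simp [hyx]) (by simp)]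
  simp [hp x]

lemma integral_pointMassMeasure (hp : IsPMF p) (g : X → ℝ) :
    ∫ x, g x ∂pointMassMeasure p = ∑ x, p x * g x := by
  have := isProbabilityMeasure_pointMassMeasure hp
  simp [integral_fintype Integrable.of_finite, pointMassMeasure_real_singleton hp.1]

end PointMass

section Finite

variable {X : Type*} [Fintype X] {p q m : X → ℝ}

lemma IsPMF.exists_pos (hp : IsPMF p) : ∃ x, 0 < p x := by
  obtain ⟨x, -, hx⟩ := Finset.exists_ne_zero_of_sum_ne_zero (hp.2.symm ▸ one_ne_zero)
  exact ⟨x, (hp.1 x).lt_of_ne' hx⟩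

lemma sum_mul_exp_pos (hm : ∀ x, 0 ≤ m x) {x₀ : X} (hx₀ : 0 < m x₀) (g : X → ℝ) :
    0 < ∑ x, m x * exp (g x) :=
  Finset.sum_pos' (fun x _ => mul_nonneg (hm x) (exp_pos _).le)
    ⟨x₀, Finset.mem_univ _, mul_pos hx₀ (exp_pos _)⟩

lemma IsPMF.log_sum_mul_exp_sub_le_of_mem_Icc (hm : IsPMF m) {h : X → ℝ} {a b : ℝ}
    (hab : ∀ x, h x ∈ Set.Icc a b) (t : ℝ) :
    log (∑ x, m x * exp (t * (h x - ∑ y, m y * h y))) ≤ t ^ 2 * (b - a) ^ 2 / 8 := by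
  let : MeasurableSpace X := ⊤
  have := isProbabilityMeasure_pointMassMeasure hm
  have hoeffding := (hasSubgaussianMGF_of_mem_Icc (μ := pointMassMeasure m)
    (measurable_of_finite h).aemeasurable (ae_of_all _ hab)).mgf_le t
  simp only [mgf, integral_pointMassMeasure hm] at hoeffding
  obtain ⟨x₀, hx₀⟩ := hm.exists_pos
  rw [log_le_iff_le_exp (sum_mul_exp_pos hm.1 hx₀ _)]
  convert hoeffding using 2
  push_cast
  rw [Real.norm_eq_abs, div_pow, sq_abs]
  ring

lemma mul_sub_log_div_sub_log_le {q m Z : ℝ} (hq : 0 ≤ q) (hm : 0 ≤ m) (hqm : m = 0 → q = 0)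
    (hZ : 0 < Z) (g : ℝ) :
    q * (g - log (q / m) - log Z) ≤ m * exp g / Z - q := by
  rcases hq.eq_or_lt with rfl | hq
  · simp only [zero_mul, sub_zero]; positivity
  have hm : 0 < m := hm.lt_of_ne fun h => hq.ne' (hqm h.symm)
  have key := log_le_sub_one_of_pos (x := m * exp g / (q * Z)) (by positivity)
  rw [log_div (by positivity) (by positivity), log_mul hm.ne' (exp_pos g).ne',
    log_mul hq.ne' hZ.ne', log_exp] at key
  rw [log_div hq.ne' hm.ne']
  calc q * (g - (log q - log m) - log Z) = q * (log m + g - (log q + log Z)) := by ring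
    _ ≤ q * (m * exp g / (q * Z) - 1) := by gcongr
    _ = m * exp g / Z - q := by field_simp

lemma IsPMF.sum_mul_le_klDiv_add_log_sum_mul_exp (hq : IsPMF q) (hm : ∀ x, 0 ≤ m x)
    (hqm : ∀ x, m x = 0 → q x = 0) (g : X → ℝ) :
    ∑ x, q x * g x ≤ klDiv q m + log (∑ x, m x * exp (g x)) := by
  set Z := ∑ x, m x * exp (g x)
  obtain ⟨x₀, hx₀⟩ := hq.exists_pos
  have hZ : 0 < Z := sum_mul_exp_pos hm ((hm x₀).lt_of_ne' (mt (hqm x₀) hx₀.ne')) g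
  have hsum := Finset.sum_le_sum fun x (_ : x ∈ Finset.univ) =>
    mul_sub_log_div_sub_log_le (hq.1 x) (hm x) (hqm x) hZ (g x)
  rw [Finset.sum_sub_distrib, ← Finset.sum_div, div_self hZ.ne', hq.2, sub_self] at hsum
  simp only [mul_sub, Finset.sum_sub_distrib, ← Finset.sum_mul, hq.2, one_mul] at hsum
  unfold klDiv
  linarith

lemma IsPMF.mul_sub_le_klDiv_add_of_mem_Icc (hq : IsPMF q) (hm : IsPMF m)
    (hqm : ∀ x, m x = 0 → q x = 0) {h : X → ℝ} {a b : ℝ} (hab : ∀ x, h x ∈ Set.Icc a b) (t : ℝ) :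
    t * (∑ x, q x * h x - ∑ x, m x * h x) ≤ klDiv q m + t ^ 2 * (b - a) ^ 2 / 8 := by
  have hdv := hq.sum_mul_le_klDiv_add_log_sum_mul_exp hm.1 hqm
    fun x => t * (h x - ∑ y, m y * h y)
  have hsum : ∑ x, q x * (t * (h x - ∑ y, m y * h y)) =
      t * (∑ x, q x * h x - ∑ x, m x * h x) := by
    simp only [mul_left_comm (q _) t, ← Finset.mul_sum, mul_sub, Finset.sum_sub_distrib,
      ← Finset.sum_mul, hq.2, one_mul]
  linarith [hm.log_sum_mul_exp_sub_le_of_mem_Icc hab t]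

end Finite

lemma le_mul_sqrt_of_forall_mul_le_add_sq {D K H : ℝ} (hH : 0 ≤ H)
    (h : ∀ t, t * D ≤ K + t ^ 2 * H ^ 2 / 4) : D ≤ H * √K := by
  rcases le_or_gt D 0 with hD | hD
  · exact hD.trans (by positivity)
  rcases hH.eq_or_lt with rfl | hH
  · have := h ((K + 1) / D)
    rw [div_mul_cancel₀ _ hD.ne'] at this
    linarith
  have hsq : D ^ 2 ≤ H ^ 2 * K := by
    -- `t = 2D / H²` maximizes `t D - t² H² / 4`, with maximum `D² / H²`.
    have key := h (2 * D / H ^ 2)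
    rw [show 2 * D / H ^ 2 * D = 2 * (D ^ 2 / H ^ 2) by ring,
      show (2 * D / H ^ 2) ^ 2 * H ^ 2 / 4 = D ^ 2 / H ^ 2 by field_simp; ring] at key
    have : D ^ 2 / H ^ 2 ≤ K := by linarith
    rwa [div_le_iff₀ (by positivity), mul_comm] at this
  calc D = √(D ^ 2) := (sqrt_sq hD.le).symm
    _ ≤ √(H ^ 2 * K) := sqrt_le_sqrt hsq
    _ = H * √K := by rw [sqrt_mul (sq_nonneg H), sqrt_sq hH.le]

theorem change_of_measure_js_bound {X : Type*} [Fintype X]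
    (P Q : X → ℝ) (hP : IsPMF P) (hQ : IsPMF Q)
    (Hhat : ℝ) (f : X → ℝ) (hf : ∀ x, f x ∈ Set.Icc (0 : ℝ) Hhat) :
    (∑ x, Q x * f x) - (∑ x, P x * f x) ≤
      Hhat * Real.sqrt (2 * jsDiv P Q) := by
  set M : X → ℝ := fun x => (P x + Q x) / 2
  have hM : IsPMF M := by
    refine ⟨fun x => by have := hP.1 x; have := hQ.1 x; positivity, ?_⟩
    simp only [M, ← Finset.sum_div, Finset.sum_add_distrib, hP.2, hQ.2]
    norm_num
  have hPQM : ∀ x, M x = 0 → P x = 0 ∧ Q x = 0 := fun x hx =>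
    (add_eq_zero_iff_of_nonneg (hP.1 x) (hQ.1 x)).1 (by simpa [M] using hx)
  obtain ⟨x₀, -⟩ := hP.exists_pos
  refine le_mul_sqrt_of_forall_mul_le_add_sq ((hf x₀).1.trans (hf x₀).2) fun t => ?_
  have hQ' := hQ.mul_sub_le_klDiv_add_of_mem_Icc hM (fun x hx => (hPQM x hx).2) hf t
  have hP' := hP.mul_sub_le_klDiv_add_of_mem_Icc hM (fun x hx => (hPQM x hx).1) hf (-t)
  have hjs : 2 * jsDiv P Q = klDiv P M + klDiv Q M := by unfold jsDiv; ring
  rw [hjs]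
  linear_combination hQ' + hP'
end

section
/- Let P_X, Q_X be distributions on a finite product set X = X_v × X_t with marginals P_{X_v}, Q_{X_v}, P_{X_t}, Q_{X_t}, and suppose the conditionals agree: P_{X_t|X_v} = Q_{X_t|X_v} and P_{X_v|X_t} = Q_{X_v|X_t}. Then 2·D_JS(P_X ‖ Q_X) ≤ D_JS(P_{X_v} ‖ Q_{X_v}) + D_JS(P_{X_t} ‖ Q_{X_t}), and hence √(2 D_JS(P_X‖Q_X)) ≤ D_JS(P_{X_v}‖Q_{X_v})^{1/2} + D_JS(P_{X_t}‖Q_{X_t})^{1/2}. -/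
open Finset Real

/-- sqrt is subadditive (no sign assumptions needed). -/
lemma aux_sqrt_add_le (a b : ℝ) : Real.sqrt (a + b) ≤ Real.sqrt a + Real.sqrt b := by
  rcases le_or_gt a 0 with ha | ha
  · have h1 : Real.sqrt a = 0 := Real.sqrt_eq_zero_of_nonpos ha
    have h2 : Real.sqrt (a + b) ≤ Real.sqrt b :=
      Real.sqrt_le_sqrt (by linarith)
    rw [h1]; linarith
  rcases le_or_gt b 0 with hb | hb
  · have h1 : Real.sqrt b = 0 := Real.sqrt_eq_zero_of_nonpos hb
    have h2 : Real.sqrt (a + b) ≤ Real.sqrt a :=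
      Real.sqrt_le_sqrt (by linarith)
    rw [h1]; linarith
  · have h : a + b ≤ (Real.sqrt a + Real.sqrt b) ^ 2 := by
      have ha' := Real.sq_sqrt ha.le
      have hb' := Real.sq_sqrt hb.le
      have hs : 0 ≤ Real.sqrt a * Real.sqrt b :=
        mul_nonneg (Real.sqrt_nonneg a) (Real.sqrt_nonneg b)
      ring_nf
      nlinarith
    calc Real.sqrt (a + b) ≤ Real.sqrt ((Real.sqrt a + Real.sqrt b) ^ 2) :=
          Real.sqrt_le_sqrt h
      _ = Real.sqrt a + Real.sqrt b := by
          rw [Real.sqrt_sq (by positivity)]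

/-- Key lemma: when the cross-product relation holds (conditionals agree),
the KL divergence from p to the midpoint equals the corresponding marginal KL. -/
lemma aux_kl_marginal {V T : Type*} [Fintype V] [Fintype T]
    (p q : V × T → ℝ) (hp0 : ∀ x, 0 ≤ p x) (hq0 : ∀ x, 0 ≤ q x)
    (hcross : ∀ v t, p (v, t) * (∑ t', q (v, t')) = q (v, t) * (∑ t', p (v, t'))) :
    klDiv p (fun x => (p x + q x) / 2) =
      klDiv (fun v => ∑ t, p (v, t))
        (fun v => ((∑ t, p (v, t)) + (∑ t, q (v, t))) / 2) := by
  unfold klDiv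
  rw [Fintype.sum_prod_type]
  refine Finset.sum_congr rfl fun v _ => ?_
  set a := ∑ t, p (v, t) with ha
  set b := ∑ t, q (v, t) with hb
  have key : ∀ t, p (v, t) * Real.log (p (v, t) / ((p (v, t) + q (v, t)) / 2))
      = p (v, t) * Real.log (a / ((a + b) / 2)) := by
    intro t
    rcases eq_or_lt_of_le (hp0 (v, t)) with h0 | hpos
    · rw [← h0]; ring
    · have hqn : 0 ≤ q (v, t) := hq0 (v, t)
      have hapos : 0 < a := lt_of_lt_of_le hpos
        (Finset.single_le_sum (fun t' _ => hp0 (v, t')) (Finset.mem_univ t))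
      have hbn : 0 ≤ b := Finset.sum_nonneg fun t' _ => hq0 (v, t')
      have hpq : 0 < p (v, t) + q (v, t) := by linarith
      have hab : 0 < a + b := by linarith
      have hcr := hcross v t
      rw [← hb, ← ha] at hcr
      have : p (v, t) / ((p (v, t) + q (v, t)) / 2) = a / ((a + b) / 2) := by
        rw [div_eq_div_iff (by positivity) (by positivity)]
        ring_nf
        nlinarith
      rw [this]
  calc ∑ t, p (v, t) * Real.log (p (v, t) / ((p (v, t) + q (v, t)) / 2))
      = ∑ t, p (v, t) * Real.log (a / ((a + b) / 2)) := Finset.sum_congr rfl fun t _ => key t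
    _ = a * Real.log (a / ((a + b) / 2)) := by rw [← Finset.sum_mul]

/-- KL is invariant under swapping the product coordinates. -/
lemma aux_kl_swap {V T : Type*} [Fintype V] [Fintype T] (p q : V × T → ℝ) :
    klDiv p q = klDiv (fun x : T × V => p (x.2, x.1)) (fun x : T × V => q (x.2, x.1)) := by
  unfold klDiv
  rw [← Equiv.sum_comp (Equiv.prodComm T V) (fun x : V × T => p x * Real.log (p x / q x))]
  rfl

theorem joint_js_decomposition_consistent_conditionals {V T : Type*}
    [Fintype V] [Fintype T]
    (p q : V × T → ℝ) (hp : IsPMF p) (hq : IsPMF q)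
    (hTcond : ∀ v t, p (v, t) / (∑ t', p (v, t')) = q (v, t) / ∑ t', q (v, t'))
    (hVcond : ∀ v t, p (v, t) / (∑ v', p (v', t)) = q (v, t) / ∑ v', q (v', t)) :
    2 * jsDiv p q ≤
        jsDiv (fun v => ∑ t, p (v, t)) (fun v => ∑ t, q (v, t)) +
        jsDiv (fun t => ∑ v, p (v, t)) (fun t => ∑ v, q (v, t)) ∧
    Real.sqrt (2 * jsDiv p q) ≤
      jsDiv (fun v => ∑ t, p (v, t)) (fun v => ∑ t, q (v, t)) ^ ((1 : ℝ) / 2) +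
      jsDiv (fun t => ∑ v, p (v, t)) (fun t => ∑ v, q (v, t)) ^ ((1 : ℝ) / 2) := by
  obtain ⟨hp0, _⟩ := hp
  obtain ⟨hq0, _⟩ := hq
  -- cross relations
  have crossT : ∀ v t, p (v, t) * (∑ t', q (v, t')) = q (v, t) * (∑ t', p (v, t')) := by
    intro v t
    have hA : 0 ≤ ∑ t', p (v, t') := Finset.sum_nonneg fun t' _ => hp0 (v, t')
    have hB : 0 ≤ ∑ t', q (v, t') := Finset.sum_nonneg fun t' _ => hq0 (v, t')
    rcases eq_or_lt_of_le hA with h0 | hApos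
    · have hz : p (v, t) = 0 := by
        have := (Finset.sum_eq_zero_iff_of_nonneg
          (fun t' (_ : t' ∈ Finset.univ) => hp0 (v, t'))).1 h0.symm t (Finset.mem_univ t)
        exact this
      rw [hz, ← h0]; ring
    rcases eq_or_lt_of_le hB with h0 | hBpos
    · have hz : q (v, t) = 0 := by
        have := (Finset.sum_eq_zero_iff_of_nonneg
          (fun t' (_ : t' ∈ Finset.univ) => hq0 (v, t'))).1 h0.symm t (Finset.mem_univ t)
        exact this
      rw [hz, ← h0]; ring
    · have := hTcond v t
      rw [div_eq_div_iff (ne_of_gt hApos) (ne_of_gt hBpos)] at this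
      exact this
  have crossV : ∀ v t, p (v, t) * (∑ v', q (v', t)) = q (v, t) * (∑ v', p (v', t)) := by
    intro v t
    have hA : 0 ≤ ∑ v', p (v', t) := Finset.sum_nonneg fun v' _ => hp0 (v', t)
    have hB : 0 ≤ ∑ v', q (v', t) := Finset.sum_nonneg fun v' _ => hq0 (v', t)
    rcases eq_or_lt_of_le hA with h0 | hApos
    · have hz : p (v, t) = 0 := by
        have := (Finset.sum_eq_zero_iff_of_nonneg
          (fun v' (_ : v' ∈ Finset.univ) => hp0 (v', t))).1 h0.symm v (Finset.mem_univ v)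
        exact this
      rw [hz, ← h0]; ring
    rcases eq_or_lt_of_le hB with h0 | hBpos
    · have hz : q (v, t) = 0 := by
        have := (Finset.sum_eq_zero_iff_of_nonneg
          (fun v' (_ : v' ∈ Finset.univ) => hq0 (v', t))).1 h0.symm v (Finset.mem_univ v)
        exact this
      rw [hz, ← h0]; ring
    · have := hVcond v t
      rw [div_eq_div_iff (ne_of_gt hApos) (ne_of_gt hBpos)] at this
      exact this
  -- V marginal: jsDiv p q = jsDiv pV qV
  have hJV : jsDiv p q = jsDiv (fun v => ∑ t, p (v, t)) (fun v => ∑ t, q (v, t)) := by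
    unfold jsDiv
    have e1 := aux_kl_marginal p q hp0 hq0 crossT
    have e2 : klDiv q (fun x => (p x + q x) / 2) =
        klDiv (fun v => ∑ t, q (v, t))
          (fun v => ((∑ t, p (v, t)) + (∑ t, q (v, t))) / 2) := by
      have := aux_kl_marginal q p hq0 hp0 (fun v t => (crossT v t).symm)
      have h1 : (fun x => (q x + p x) / 2) = (fun x => (p x + q x) / 2) := by
        funext x; ring
      have h2 : (fun v => ((∑ t, q (v, t)) + (∑ t, p (v, t))) / 2)
          = (fun v => ((∑ t, p (v, t)) + (∑ t, q (v, t))) / 2) := by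
        funext v; ring
      rw [h1, h2] at this
      exact this
    rw [e1, e2]
  -- T marginal: jsDiv p q = jsDiv pT qT
  have hJT : jsDiv p q = jsDiv (fun t => ∑ v, p (v, t)) (fun t => ∑ v, q (v, t)) := by
    set p' : T × V → ℝ := fun x => p (x.2, x.1) with hp'
    set q' : T × V → ℝ := fun x => q (x.2, x.1) with hq'
    have hp0' : ∀ x, 0 ≤ p' x := fun x => hp0 _
    have hq0' : ∀ x, 0 ≤ q' x := fun x => hq0 _
    have cross' : ∀ t v, p' (t, v) * (∑ v', q' (t, v')) = q' (t, v) * (∑ v', p' (t, v')) :=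
      fun t v => crossV v t
    unfold jsDiv
    have s1 : klDiv p (fun x => (p x + q x) / 2)
        = klDiv p' (fun x : T × V => (p' x + q' x) / 2) := by
      rw [aux_kl_swap p (fun x => (p x + q x) / 2)]
    have s2 : klDiv q (fun x => (p x + q x) / 2)
        = klDiv q' (fun x : T × V => (p' x + q' x) / 2) := by
      rw [aux_kl_swap q (fun x => (p x + q x) / 2)]
    have e1 := aux_kl_marginal p' q' hp0' hq0' cross'
    have e2 : klDiv q' (fun x => (p' x + q' x) / 2) =
        klDiv (fun t => ∑ v, q' (t, v))
          (fun t => ((∑ v, p' (t, v)) + (∑ v, q' (t, v))) / 2) := by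
      have := aux_kl_marginal q' p' hq0' hp0' (fun t v => (cross' t v).symm)
      have h1 : (fun x => (q' x + p' x) / 2) = (fun x => (p' x + q' x) / 2) := by
        funext x; ring
      have h2 : (fun t => ((∑ v, q' (t, v)) + (∑ v, p' (t, v))) / 2)
          = (fun t => ((∑ v, p' (t, v)) + (∑ v, q' (t, v))) / 2) := by
        funext t; ring
      rw [h1, h2] at this
      exact this
    rw [s1, s2, e1, e2]
  constructor
  · linarith [hJV, hJT]
  · have h2js : 2 * jsDiv p q =
        jsDiv (fun v => ∑ t, p (v, t)) (fun v => ∑ t, q (v, t)) +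
        jsDiv (fun t => ∑ v, p (v, t)) (fun t => ∑ v, q (v, t)) := by
      linarith [hJV, hJT]
    rw [h2js, ← Real.sqrt_eq_rpow, ← Real.sqrt_eq_rpow]
    exact aux_sqrt_add_le _ _
end
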